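/- arXiv:2112.09627 — 2 statements merged into one kernel-verified Lean document; each statement's English description precedes it below -/
import Mathlib

section
/- Let $(\mu_j)$ be a sequence of finite Borel measures on a compact metric space $X$ converging weakly to a measure $\mu$, and suppose there is a finite Borel measure $\lambda$ and a continuous function $F : [0,\infty) \to [0,\infty)$ with $F(0)=0$ such that $\mu_j(E) + \mu(E) \leq F(\lambda(E))$ for all Borel sets $E$ and all $j$. If $(u_j)$ is a sequence of Borel functions on $X$, uniformly bounded by a constant $M$, converging in $L^1(\lambda)$ to a bounded Borel function $u$, then $\int_X u_j \, d\mu_j \to \int_X u \, d\mu$. -/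
open MeasureTheory Filter

lemma integrable_of_bdd {X : Type*} [MeasurableSpace X] {ν : Measure X}
    [IsFiniteMeasure ν] {w : X → ℝ} (hw : Measurable w) {C : ℝ} (hC : ∀ x, |w x| ≤ C) :
    Integrable w ν :=
  ⟨hw.aestronglyMeasurable, HasFiniteIntegral.of_bounded (C := C)
    (ae_of_all _ fun x => by simpa using hC x)⟩

/-- Key estimate: if `ν E ≤ F (λ E)` for all measurable `E` and `|w| ≤ C`, then
`|∫ w dν| ≤ δ * F(λ univ) + C * F(λ {δ ≤ |w|})`. -/
lemma key_est {X : Type*} [MeasurableSpace X] (ν lam : Measure X)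
    [IsFiniteMeasure ν] [IsFiniteMeasure lam]
    (F : ℝ → ℝ) (hF : ∀ E : Set X, MeasurableSet E → (ν E).toReal ≤ F ((lam E).toReal))
    (w : X → ℝ) (hw : Measurable w) (C : ℝ) (hC0 : 0 ≤ C) (hC : ∀ x, |w x| ≤ C)
    (δ : ℝ) (hδ : 0 < δ) :
    |∫ x, w x ∂ν| ≤ δ * F ((lam Set.univ).toReal)
      + C * F ((lam {x | δ ≤ |w x|}).toReal) := by
  set E : Set X := {x | δ ≤ |w x|} with hEdef
  have hE : MeasurableSet E := measurableSet_le measurable_const hw.abs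
  have hInt : Integrable w ν := integrable_of_bdd hw hC
  have h1 : |∫ x, w x ∂ν| ≤ ∫ x, |w x| ∂ν := by
    simpa using norm_integral_le_integral_norm (μ := ν) w
  have hsplit : ∫ x, |w x| ∂ν = (∫ x in E, |w x| ∂ν) + ∫ x in Eᶜ, |w x| ∂ν :=
    (integral_add_compl hE hInt.abs).symm
  have h2 : ∫ x in E, |w x| ∂ν ≤ C * (ν E).toReal := by
    have := norm_setIntegral_le_of_norm_le_const (μ := ν) (s := E)
      (f := fun x => |w x|) (C := C) (measure_lt_top ν E)
      (fun x _ => by simpa using hC x)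
    exact (le_abs_self _).trans (by simpa [measureReal_def] using this)
  have h3 : ∫ x in Eᶜ, |w x| ∂ν ≤ δ * (ν Eᶜ).toReal := by
    have := norm_setIntegral_le_of_norm_le_const (μ := ν) (s := Eᶜ)
      (f := fun x => |w x|) (C := δ) (measure_lt_top ν Eᶜ)
      (fun x hx => by
        simp only [hEdef, Set.mem_compl_iff, Set.mem_setOf_eq, not_le] at hx
        simpa using hx.le)
    exact (le_abs_self _).trans (by simpa [measureReal_def] using this)
  have h4 : (ν Eᶜ).toReal ≤ (ν Set.univ).toReal :=
    ENNReal.toReal_mono (measure_ne_top _ _) (measure_mono (Set.subset_univ _))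
  calc |∫ x, w x ∂ν| ≤ (∫ x in E, |w x| ∂ν) + ∫ x in Eᶜ, |w x| ∂ν := by
        rw [← hsplit]; exact h1
    _ ≤ C * (ν E).toReal + δ * (ν Set.univ).toReal := by
        refine add_le_add h2 (h3.trans ?_)
        gcongr
    _ ≤ C * F ((lam E).toReal) + δ * F ((lam Set.univ).toReal) := by
        gcongr
        · exact hF E hE
        · exact hF Set.univ MeasurableSet.univ
    _ = _ := by ring

/-- Markov's inequality in the form we need. -/
lemma markov {X : Type*} [MeasurableSpace X] (lam : Measure X) [IsFiniteMeasure lam]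
    (w : X → ℝ) (hw : Measurable w) {C : ℝ} (hC : ∀ x, |w x| ≤ C)
    {δ : ℝ} (hδ : 0 < δ) :
    (lam {x | δ ≤ |w x|}).toReal ≤ (∫ x, |w x| ∂lam) / δ := by
  rw [le_div_iff₀ hδ]
  have h := mul_meas_ge_le_integral_of_nonneg (μ := lam) (f := fun x => |w x|)
    (ae_of_all _ fun x => abs_nonneg _)
    (integrable_of_bdd hw hC).abs δ
  calc (lam {x | δ ≤ |w x|}).toReal * δ = δ * (lam {x | δ ≤ |w x|}).toReal := mul_comm _ _
    _ ≤ ∫ x, |w x| ∂lam := h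

/-- If `μⱼ ⇀ μ` weakly, all measures are uniformly dominated by `F ∘ λ` with `F`
continuous and `F 0 = 0`, and `uⱼ` are uniformly bounded Borel functions converging
in `L¹(λ)` to a bounded Borel function `u`, then `∫ uⱼ dμⱼ → ∫ u dμ`. -/
theorem stmt2 {X : Type*} [MetricSpace X] [CompactSpace X] [MeasurableSpace X]
    [BorelSpace X]
    (μs : ℕ → Measure X) (μ lam : Measure X)
    (hμs_fin : ∀ j, IsFiniteMeasure (μs j)) [IsFiniteMeasure μ] [IsFiniteMeasure lam]
    (hweak : ∀ g : C(X, ℝ), Tendsto (fun j => ∫ x, g x ∂(μs j)) atTop (nhds (∫ x, g x ∂μ)))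
    (F : ℝ → ℝ) (hF_cont : Continuous F) (hF0 : F 0 = 0)
    (hdom : ∀ (j : ℕ) (E : Set X), MeasurableSet E →
      ((μs j) E).toReal + (μ E).toReal ≤ F ((lam E).toReal))
    (u : ℕ → X → ℝ) (hu_meas : ∀ j, Measurable (u j))
    (M : ℝ) (hu_bd : ∀ j x, |u j x| ≤ M)
    (v : X → ℝ) (hv_meas : Measurable v) (hv_bd : ∃ M' : ℝ, ∀ x, |v x| ≤ M')
    (hL1 : Tendsto (fun j => ∫ x, |u j x - v x| ∂lam) atTop (nhds 0)) :
    Tendsto (fun j => ∫ x, u j x ∂(μs j)) atTop (nhds (∫ x, v x ∂μ)) := by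
  haveI := hμs_fin
  rcases isEmpty_or_nonempty X with hX | hX
  · simp only [integral_of_isEmpty]
    exact tendsto_const_nhds
  obtain ⟨M', hM'⟩ := hv_bd
  have hM'0 : 0 ≤ M' := (abs_nonneg _).trans (hM' hX.some)
  have hM0 : 0 ≤ M := (abs_nonneg _).trans (hu_bd 0 hX.some)
  have hdomμ : ∀ E : Set X, MeasurableSet E → (μ E).toReal ≤ F ((lam E).toReal) :=
    fun E hE => le_trans (le_add_of_nonneg_left ENNReal.toReal_nonneg) (hdom 0 E hE)
  have hdomμs : ∀ j, ∀ E : Set X, MeasurableSet E →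
      ((μs j) E).toReal ≤ F ((lam E).toReal) :=
    fun j E hE => le_trans (le_add_of_nonneg_right ENNReal.toReal_nonneg) (hdom j E hE)
  set A := F ((lam Set.univ).toReal) with hAdef
  have hA0 : 0 ≤ A := ENNReal.toReal_nonneg.trans (hdomμ Set.univ MeasurableSet.univ)
  set C : ℝ := M + 2 * M' + 1 with hCdef
  have hC0 : 0 < C := by positivity
  rw [Metric.tendsto_atTop]
  intro ε hε
  set δ : ℝ := ε / (8 * (A + 1)) with hδdef
  have hδ : 0 < δ := by positivity
  have hδA : δ * A ≤ ε / 8 := by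
    rw [hδdef, div_mul_eq_mul_div, div_le_div_iff₀ (by positivity) (by norm_num)]
    nlinarith
  set ε' : ℝ := ε / (8 * C) with hε'def
  have hε' : 0 < ε' := by positivity
  obtain ⟨η, hη0, hη⟩ : ∃ η > 0, ∀ t : ℝ, |t| < η → |F t| < ε' := by
    obtain ⟨η, hη0, hη⟩ := Metric.continuousAt_iff.mp (hF_cont.continuousAt (x := 0)) ε' hε'
    exact ⟨η, hη0, fun t ht => by
      have := hη (x := t) (by simpa [Real.dist_eq] using ht)
      simpa [Real.dist_eq, hF0] using this⟩
  -- the generic estimate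
  have est : ∀ (ν : Measure X) [IsFiniteMeasure ν],
      (∀ E : Set X, MeasurableSet E → (ν E).toReal ≤ F ((lam E).toReal)) →
      ∀ w : X → ℝ, Measurable w → (∀ x, |w x| ≤ C) →
      (∫ x, |w x| ∂lam) < δ * η → |∫ x, w x ∂ν| < ε / 4 := by
    intro ν _ hν w hw hwC hwint
    have hmark : (lam {x | δ ≤ |w x|}).toReal < η := by
      refine lt_of_le_of_lt (markov lam w hw hwC hδ) ?_
      rw [div_lt_iff₀ hδ]
      calc (∫ x, |w x| ∂lam) < δ * η := hwint
        _ = η * δ := mul_comm _ _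
    have hFsmall : F ((lam {x | δ ≤ |w x|}).toReal) < ε' := by
      have := hη _ (by rwa [abs_of_nonneg ENNReal.toReal_nonneg])
      exact (le_abs_self _).trans_lt this
    have hkey := key_est ν lam F hν w hw C hC0.le hwC δ hδ
    have hCε' : C * ε' = ε / 8 := by
      rw [hε'def]; field_simp
    have : C * F ((lam {x | δ ≤ |w x|}).toReal) < C * ε' :=
      (mul_lt_mul_iff_right₀ hC0).mpr hFsmall
    calc |∫ x, w x ∂ν| ≤ δ * A + C * F ((lam {x | δ ≤ |w x|}).toReal) := hkey
      _ < δ * A + C * ε' := add_lt_add_right this _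
      _ ≤ ε / 8 + ε / 8 := add_le_add hδA (le_of_eq hCε')
      _ = ε / 4 := by ring
  -- continuous approximation of v
  have hv_int : Integrable v lam := integrable_of_bdd hv_meas hM'
  obtain ⟨g0, hg0, hg0int⟩ := hv_int.exists_boundedContinuous_integral_sub_le
    (ε := δ * η / 2) (by positivity)
  set g : C(X, ℝ) := ⟨fun x => min M' (max (-M') (g0 x)),
    continuous_const.min (continuous_const.max g0.continuous)⟩ with hgdef
  have hg_bd : ∀ x, |g x| ≤ M' := fun x =>
    abs_le.mpr ⟨le_min (neg_le_self hM'0) (le_max_left _ _), min_le_left _ _⟩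
  have hg_close : ∀ x, |v x - g x| ≤ |v x - g0 x| := by
    intro x
    have hvx : v x = min M' (max (-M') (v x)) := by
      rw [max_eq_right (neg_le_of_abs_le (hM' x)), min_eq_right (le_of_abs_le (hM' x))]
    calc |v x - g x| = |min M' (max (-M') (v x)) - min M' (max (-M') (g0 x))| := by
          rw [← hvx]; rfl
      _ ≤ max |M' - M'| |max (-M') (v x) - max (-M') (g0 x)| :=
          abs_min_sub_min_le_max _ _ _ _
      _ = |max (-M') (v x) - max (-M') (g0 x)| := by simp
      _ = |max (v x) (-M') - max (g0 x) (-M')| := by rw [max_comm (-M') (v x), max_comm (-M') (g0 x)]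
      _ ≤ |v x - g0 x| := abs_max_sub_max_le_abs _ _ _
  have hg_meas : Measurable (g : X → ℝ) := g.continuous.measurable
  have hvg_int : ∫ x, |v x - g x| ∂lam < δ * η := by
    have hle : ∫ x, |v x - g x| ∂lam ≤ ∫ x, |v x - g0 x| ∂lam := by
      refine integral_mono (integrable_of_bdd (hv_meas.sub hg_meas)
        (C := M' + M') fun x => (abs_sub _ _).trans (add_le_add (hM' x) (hg_bd x))).abs
        (hv_int.sub hg0int).abs (fun x => hg_close x)
    have h2 : ∫ x, |v x - g0 x| ∂lam ≤ δ * η / 2 := by simpa using hg0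
    have h3 : 0 < δ * η := by positivity
    linarith
  -- eventual bounds
  have hev1 : ∀ᶠ j in atTop, ∫ x, |u j x - v x| ∂lam < δ * η :=
    hL1.eventually (gt_mem_nhds (by positivity))
  have hev2 : ∀ᶠ j in atTop, dist (∫ x, g x ∂(μs j)) (∫ x, g x ∂μ) < ε / 4 :=
    (hweak g).eventually (Metric.ball_mem_nhds _ (by positivity))
  rw [← eventually_atTop]
  filter_upwards [hev1, hev2] with j h1 h2
  -- integrability
  have hμj_int_u : Integrable (u j) (μs j) := integrable_of_bdd (hu_meas j) (hu_bd j)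
  have hμj_int_v : Integrable v (μs j) := integrable_of_bdd hv_meas hM'
  have hμj_int_g : Integrable (g : X → ℝ) (μs j) := integrable_of_bdd hg_meas hg_bd
  have hμ_int_v : Integrable v μ := integrable_of_bdd hv_meas hM'
  have hμ_int_g : Integrable (g : X → ℝ) μ := integrable_of_bdd hg_meas hg_bd
  -- bounds on the pieces
  have hb1 : |∫ x, (u j x - v x) ∂(μs j)| < ε / 4 := by
    refine est (μs j) (hdomμs j) _ ((hu_meas j).sub hv_meas) ?_ h1
    intro x
    calc |u j x - v x| ≤ |u j x| + |v x| := abs_sub _ _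
      _ ≤ M + M' := add_le_add (hu_bd j x) (hM' x)
      _ ≤ C := by rw [hCdef]; linarith
  have hbC : ∀ x, |v x - g x| ≤ C := fun x => by
    calc |v x - g x| ≤ |v x| + |g x| := abs_sub _ _
      _ ≤ M' + M' := add_le_add (hM' x) (hg_bd x)
      _ ≤ C := by rw [hCdef]; linarith
  have hb2 : |∫ x, (v x - g x) ∂(μs j)| < ε / 4 :=
    est (μs j) (hdomμs j) _ (hv_meas.sub hg_meas) hbC hvg_int
  have hb4 : |∫ x, (v x - g x) ∂μ| < ε / 4 :=
    est μ hdomμ _ (hv_meas.sub hg_meas) hbC hvg_int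
  -- assemble
  have hdecomp_j : ∫ x, u j x ∂(μs j)
      = (∫ x, (u j x - v x) ∂(μs j)) + (∫ x, (v x - g x) ∂(μs j)) + ∫ x, g x ∂(μs j) := by
    rw [integral_sub hμj_int_u hμj_int_v, integral_sub hμj_int_v hμj_int_g]
    ring
  have hdecomp : ∫ x, v x ∂μ = (∫ x, (v x - g x) ∂μ) + ∫ x, g x ∂μ := by
    rw [integral_sub hμ_int_v hμ_int_g]; ring
  rw [Real.dist_eq, hdecomp_j, hdecomp]
  have habs : |(∫ x, (u j x - v x) ∂(μs j)) + (∫ x, (v x - g x) ∂(μs j)) + ∫ x, g x ∂(μs j)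
      - ((∫ x, (v x - g x) ∂μ) + ∫ x, g x ∂μ)|
      ≤ |∫ x, (u j x - v x) ∂(μs j)| + |∫ x, (v x - g x) ∂(μs j)|
        + |∫ x, g x ∂(μs j) - ∫ x, g x ∂μ| + |∫ x, (v x - g x) ∂μ| := by
    have : (∫ x, (u j x - v x) ∂(μs j)) + (∫ x, (v x - g x) ∂(μs j)) + ∫ x, g x ∂(μs j)
        - ((∫ x, (v x - g x) ∂μ) + ∫ x, g x ∂μ)
        = (∫ x, (u j x - v x) ∂(μs j)) + (∫ x, (v x - g x) ∂(μs j))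
          + (∫ x, g x ∂(μs j) - ∫ x, g x ∂μ) + -(∫ x, (v x - g x) ∂μ) := by ring
    rw [this]
    calc |_ + -(∫ x, (v x - g x) ∂μ)| ≤ _ := abs_add_le _ _
      _ ≤ _ := by
        rw [abs_neg]
        gcongr
        exact (abs_add_le _ _).trans (by gcongr; exact abs_add_le _ _)
  rw [Real.dist_eq] at h2
  calc |(∫ x, (u j x - v x) ∂(μs j)) + (∫ x, (v x - g x) ∂(μs j)) + ∫ x, g x ∂(μs j)
      - ((∫ x, (v x - g x) ∂μ) + ∫ x, g x ∂μ)| ≤ _ := habs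
    _ < ε / 4 + ε / 4 + ε / 4 + ε / 4 := by
        exact add_lt_add (add_lt_add (add_lt_add hb1 hb2) h2) hb4
    _ = ε := by ring
end

section
/- Let $\nu$ be a probability measure and let $f \geq 0$ satisfy $\int f \log f \, d\nu \leq C$ (finite entropy). Let $(u_j)$ and $(u)$ be measurable functions, uniformly bounded, with $u_j \to u$ in $L^1(\nu)$, and suppose $\int |u_j - u_k|^{q}(f_j + f_k) \, d\nu \leq C$ for all $j,k$, where each $f_j \geq 0$ has entropy $\int f_j \log f_j \, d\nu \leq C$ and $q = n/(n-1) > 1$. Then $\lim_{j,k \to \infty} \int |u_j - u_k| (f_j + f_k) \, d\nu = 0$. -/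
open MeasureTheory Filter


lemma aux_le_selflog (x : ℝ) (hx : 0 ≤ x) : x ≤ x * Real.log x + 1 := by
  rcases hx.eq_or_lt with h | h
  · simp [← h]
  · have h1 := Real.log_le_sub_one_of_pos (inv_pos.mpr h)
    rw [Real.log_inv] at h1
    have h2 : x * (-Real.log x) ≤ x * (x⁻¹ - 1) := by
      exact mul_le_mul_of_nonneg_left h1 hx
    have h3 : x * x⁻¹ = 1 := mul_inv_cancel₀ h.ne'
    nlinarith

lemma key_ineq {δ M K t s a b : ℝ} (hδ : 0 < δ) (hM : 0 ≤ M) (hK : 1 < K)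
    (hlogK : 1 ≤ Real.log K) (ha : 0 ≤ a) (hb : 0 ≤ b) (ht : 0 ≤ t)
    (htM : t ≤ 2 * M) (hts : t ≤ s) :
    t * (a + b) ≤ δ * (a + b)
      + (2 * M / Real.log K) * (a * Real.log a + b * Real.log b + 2)
      + (4 * M * K / δ) * s := by
  have hlK : (0:ℝ) < Real.log K := lt_of_lt_of_le one_pos hlogK
  have h1 : a ≤ a * Real.log a + 1 := aux_le_selflog a ha
  have h2 : b ≤ b * Real.log b + 1 := aux_le_selflog b hb
  have hs : 0 ≤ s := ht.trans hts
  have hK0 : (0:ℝ) < K := lt_trans one_pos hK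
  have hterm2 : 0 ≤ (2 * M / Real.log K) * (a * Real.log a + b * Real.log b + 2) := by
    apply mul_nonneg (by positivity)
    nlinarith
  by_cases hcase : t ≤ δ
  · have hAB : 0 ≤ a + b := by linarith
    have h3 : t * (a + b) ≤ δ * (a + b) := mul_le_mul_of_nonneg_right hcase hAB
    have h4 : 0 ≤ (4 * M * K / δ) * s := by positivity
    linarith
  · push_neg at hcase
    have ha' : a ≤ (a * Real.log a + 1) / Real.log K + K := by
      by_cases hA : a ≤ K
      · have : 0 ≤ (a * Real.log a + 1) / Real.log K := div_nonneg (by linarith) hlK.le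
        linarith
      · push_neg at hA
        have hloga : Real.log K ≤ Real.log a := Real.log_le_log hK0 hA.le
        have : a * Real.log K ≤ a * Real.log a + 1 := by nlinarith
        have h5 : a ≤ (a * Real.log a + 1) / Real.log K := (le_div_iff₀ hlK).mpr this
        linarith
    have hb' : b ≤ (b * Real.log b + 1) / Real.log K + K := by
      by_cases hB : b ≤ K
      · have : 0 ≤ (b * Real.log b + 1) / Real.log K := div_nonneg (by linarith) hlK.le
        linarith
      · push_neg at hB
        have hlogb : Real.log K ≤ Real.log b := Real.log_le_log hK0 hB.le
        have : b * Real.log K ≤ b * Real.log b + 1 := by nlinarith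
        have h5 : b ≤ (b * Real.log b + 1) / Real.log K := (le_div_iff₀ hlK).mpr this
        linarith
    have step1 : t * (a + b) ≤ 2 * M * (a + b) :=
      mul_le_mul_of_nonneg_right htM (by linarith)
    have step2 : 2 * M * (a + b)
        ≤ 2 * M * (((a * Real.log a + 1) / Real.log K + K)
          + ((b * Real.log b + 1) / Real.log K + K)) := by
      apply mul_le_mul_of_nonneg_left (add_le_add ha' hb') (by linarith)
    have step3 : 2 * M * (((a * Real.log a + 1) / Real.log K + K)
          + ((b * Real.log b + 1) / Real.log K + K))
        = (2 * M / Real.log K) * (a * Real.log a + b * Real.log b + 2) + 4 * M * K := by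
      field_simp
      ring
    have step4 : 4 * M * K ≤ (4 * M * K / δ) * t := by
      rw [div_mul_eq_mul_div, le_div_iff₀ hδ]
      nlinarith [mul_nonneg (mul_nonneg (by linarith : (0:ℝ) ≤ 4 * M) hK0.le) (by linarith : (0:ℝ) ≤ t - δ)]
    have step5 : (4 * M * K / δ) * t ≤ (4 * M * K / δ) * s :=
      mul_le_mul_of_nonneg_left hts (by positivity)
    have h6 : 0 ≤ δ * (a + b) := by positivity
    linarith

/-- Entropy-bounded densities `fⱼ`, uniformly bounded `uⱼ → u` in `L¹(ν)`, and a uniform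
bound on `∫ |uⱼ - u_k|^q (fⱼ + f_k) dν` with `q = n/(n-1) > 1` imply
`∫ |uⱼ - u_k| (fⱼ + f_k) dν → 0` as `j, k → ∞`. -/
theorem stmt9 {X : Type*} [MeasurableSpace X] (ν : Measure X) [IsProbabilityMeasure ν]
    (C : ℝ) (hC : 0 < C)
    (f : X → ℝ) (hf_meas : Measurable f) (hf_nonneg : ∀ x, 0 ≤ f x)
    (hf_ent : ∫ x, f x * Real.log (f x) ∂ν ≤ C)
    (fs : ℕ → X → ℝ) (hfs_meas : ∀ j, Measurable (fs j))
    (hfs_nonneg : ∀ j x, 0 ≤ fs j x) (hfs_int : ∀ j, Integrable (fs j) ν)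
    (hfs_ent_int : ∀ j, Integrable (fun x => fs j x * Real.log (fs j x)) ν)
    (hfs_ent : ∀ j, ∫ x, fs j x * Real.log (fs j x) ∂ν ≤ C)
    (u : ℕ → X → ℝ) (hu_meas : ∀ j, Measurable (u j))
    (M : ℝ) (hu_bd : ∀ j x, |u j x| ≤ M)
    (v : X → ℝ) (hv_meas : Measurable v) (hv_bd : ∀ x, |v x| ≤ M)
    (hL1 : Tendsto (fun j => ∫ x, |u j x - v x| ∂ν) atTop (nhds 0))
    (n : ℕ) (hn : 2 ≤ n) (q : ℝ) (hq : q = (n : ℝ) / ((n : ℝ) - 1))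
    (hHolder : ∀ j k, ∫ x, |u j x - u k x| ^ q * (fs j x + fs k x) ∂ν ≤ C) :
    Tendsto (fun jk : ℕ × ℕ =>
        ∫ x, |u jk.1 x - u jk.2 x| * (fs jk.1 x + fs jk.2 x) ∂ν)
      atTop (nhds 0) := by
  have hX : Nonempty X := by
    by_contra h
    rw [not_nonempty_iff] at h
    have h1 : ν Set.univ = 1 := measure_univ
    rw [Set.univ_eq_empty_iff.mpr h] at h1
    simp at h1
  have hM : 0 ≤ M := le_trans (abs_nonneg _) (hu_bd 0 hX.some)
  -- integrability of |u j - v|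
  have hint_uv : ∀ j, Integrable (fun x => |u j x - v x|) ν := by
    intro j
    apply Integrable.mono' (integrable_const (2 * M))
      (((hu_meas j).sub hv_meas).abs.aestronglyMeasurable)
    filter_upwards with x
    rw [Real.norm_eq_abs, abs_abs]
    calc |u j x - v x| ≤ |u j x| + |v x| := abs_sub _ _
    _ ≤ 2 * M := by linarith [hu_bd j x, hv_bd x]
  set a : ℕ → ℝ := fun j => ∫ x, |u j x - v x| ∂ν with ha_def
  have ha_nonneg : ∀ j, 0 ≤ a j := fun j => integral_nonneg fun x => abs_nonneg _
  -- mass bound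
  have hmass : ∀ j, ∫ x, fs j x ∂ν ≤ C + 1 := by
    intro j
    calc ∫ x, fs j x ∂ν ≤ ∫ x, (fs j x * Real.log (fs j x) + 1) ∂ν := by
          apply integral_mono (hfs_int j) ((hfs_ent_int j).add (integrable_const 1))
          intro x
          exact aux_le_selflog _ (hfs_nonneg j x)
    _ = (∫ x, fs j x * Real.log (fs j x) ∂ν) + 1 := by
          rw [integral_add (hfs_ent_int j) (integrable_const 1), integral_const]
          simp
    _ ≤ C + 1 := by linarith [hfs_ent j]
  rw [NormedAddCommGroup.tendsto_nhds_zero]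
  intro ε hε
  set δ : ℝ := ε / (6 * (C + 1)) with hδ_def
  have hδ : 0 < δ := by positivity
  set L : ℝ := 12 * M * (C + 1) / ε + 1 with hL_def
  have hL1' : 1 ≤ L := by
    have h : 0 ≤ 12 * M * (C + 1) / ε := by positivity
    rw [hL_def]
    linarith
  have hLpos : 0 < L := by linarith
  set K : ℝ := Real.exp L with hK_def
  have hK1 : 1 < K := by
    have := Real.add_one_le_exp L
    simp only [hK_def]
    linarith
  have hlogK : Real.log K = L := Real.log_exp L
  have hlogK1 : 1 ≤ Real.log K := by rw [hlogK]; exact hL1'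
  have hK0 : 0 < K := lt_trans one_pos hK1
  set η : ℝ := ε * δ / (6 * (4 * M * K + 1)) with hη_def
  have hMK : 0 < 4 * M * K + 1 := by positivity
  have hη : 0 < η := by positivity
  -- eventually bound on a j
  have hN := Metric.tendsto_atTop.mp hL1 η hη
  obtain ⟨N, hN⟩ := hN
  rw [eventually_atTop]
  refine ⟨(N, N), fun jk hjk => ?_⟩
  obtain ⟨j, k⟩ := jk
  have haj : a j < η := by
    have := hN j hjk.1
    rwa [Real.dist_eq, sub_zero, abs_of_nonneg (ha_nonneg j)] at this
  have hak : a k < η := by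
    have := hN k hjk.2
    rwa [Real.dist_eq, sub_zero, abs_of_nonneg (ha_nonneg k)] at this
  -- integrability facts
  have g1 : Integrable (fun x => δ * (fs j x + fs k x)) ν :=
    ((hfs_int j).add (hfs_int k)).const_mul δ
  have g2 : Integrable (fun x => (2 * M / Real.log K) *
      (fs j x * Real.log (fs j x) + fs k x * Real.log (fs k x) + 2)) ν :=
    ((((hfs_ent_int j).add (hfs_ent_int k)).add (integrable_const 2))).const_mul _
  have g3 : Integrable (fun x => (4 * M * K / δ) * (|u j x - v x| + |u k x - v x|)) ν :=
    ((hint_uv j).add (hint_uv k)).const_mul _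
  have hLHSint : Integrable (fun x => |u j x - u k x| * (fs j x + fs k x)) ν := by
    apply Integrable.mono' (((hfs_int j).add (hfs_int k)).const_mul (2 * M))
      (((((hu_meas j).sub (hu_meas k)).abs).mul
        ((hfs_meas j).add (hfs_meas k))).aestronglyMeasurable)
    filter_upwards with x
    have h1 : 0 ≤ fs j x + fs k x := by linarith [hfs_nonneg j x, hfs_nonneg k x]
    show |(|u j x - u k x| * (fs j x + fs k x))| ≤ 2 * M * (fs j x + fs k x)
    rw [abs_of_nonneg (mul_nonneg (abs_nonneg _) h1)]
    apply mul_le_mul_of_nonneg_right _ h1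
    calc |u j x - u k x| ≤ |u j x| + |u k x| := abs_sub _ _
    _ ≤ 2 * M := by linarith [hu_bd j x, hu_bd k x]
  have hI0 : 0 ≤ ∫ x, |u j x - u k x| * (fs j x + fs k x) ∂ν := by
    apply integral_nonneg
    intro x
    exact mul_nonneg (abs_nonneg _) (by linarith [hfs_nonneg j x, hfs_nonneg k x])
  rw [Real.norm_eq_abs, abs_of_nonneg hI0]
  -- pointwise estimate and integral mono
  have hptwise : ∀ x, |u j x - u k x| * (fs j x + fs k x)
      ≤ δ * (fs j x + fs k x)
        + (2 * M / Real.log K) *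
            (fs j x * Real.log (fs j x) + fs k x * Real.log (fs k x) + 2)
        + (4 * M * K / δ) * (|u j x - v x| + |u k x - v x|) := by
    intro x
    apply key_ineq hδ hM hK1 hlogK1 (hfs_nonneg j x) (hfs_nonneg k x) (abs_nonneg _)
    · calc |u j x - u k x| ≤ |u j x| + |u k x| := abs_sub _ _
      _ ≤ 2 * M := by linarith [hu_bd j x, hu_bd k x]
    · calc |u j x - u k x| ≤ |u j x - v x| + |v x - u k x| := abs_sub_le _ _ _
      _ = |u j x - v x| + |u k x - v x| := by rw [abs_sub_comm (v x)]
  have step1 : ∫ x, |u j x - u k x| * (fs j x + fs k x) ∂ν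
      ≤ ∫ x, (δ * (fs j x + fs k x)
        + (2 * M / Real.log K) *
            (fs j x * Real.log (fs j x) + fs k x * Real.log (fs k x) + 2)
        + (4 * M * K / δ) * (|u j x - v x| + |u k x - v x|)) ∂ν :=
    integral_mono hLHSint ((g1.add g2).add g3) hptwise
  have step2 : ∫ x, (δ * (fs j x + fs k x)
        + (2 * M / Real.log K) *
            (fs j x * Real.log (fs j x) + fs k x * Real.log (fs k x) + 2)
        + (4 * M * K / δ) * (|u j x - v x| + |u k x - v x|)) ∂ν
      = δ * ((∫ x, fs j x ∂ν) + (∫ x, fs k x ∂ν))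
        + (2 * M / Real.log K) * ((∫ x, fs j x * Real.log (fs j x) ∂ν)
            + (∫ x, fs k x * Real.log (fs k x) ∂ν) + 2)
        + (4 * M * K / δ) * (a j + a k) := by
    have E1 : (∫ x, (δ * (fs j x + fs k x)
          + (2 * M / Real.log K) *
              (fs j x * Real.log (fs j x) + fs k x * Real.log (fs k x) + 2)
          + (4 * M * K / δ) * (|u j x - v x| + |u k x - v x|)) ∂ν)
        = (∫ x, (δ * (fs j x + fs k x)
          + (2 * M / Real.log K) *
              (fs j x * Real.log (fs j x) + fs k x * Real.log (fs k x) + 2)) ∂ν)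
          + ∫ x, (4 * M * K / δ) * (|u j x - v x| + |u k x - v x|) ∂ν :=
      integral_add (g1.add g2) g3
    have E2 : (∫ x, (δ * (fs j x + fs k x)
          + (2 * M / Real.log K) *
              (fs j x * Real.log (fs j x) + fs k x * Real.log (fs k x) + 2)) ∂ν)
        = (∫ x, δ * (fs j x + fs k x) ∂ν)
          + ∫ x, (2 * M / Real.log K) *
              (fs j x * Real.log (fs j x) + fs k x * Real.log (fs k x) + 2) ∂ν :=
      integral_add g1 g2
    have E3 : (∫ x, δ * (fs j x + fs k x) ∂ν) = δ * ∫ x, (fs j x + fs k x) ∂ν :=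
      integral_const_mul δ _
    have E4 : (∫ x, (fs j x + fs k x) ∂ν) = (∫ x, fs j x ∂ν) + ∫ x, fs k x ∂ν :=
      integral_add (hfs_int j) (hfs_int k)
    have E5 : (∫ x, (2 * M / Real.log K) *
          (fs j x * Real.log (fs j x) + fs k x * Real.log (fs k x) + 2) ∂ν)
        = (2 * M / Real.log K) *
          ∫ x, (fs j x * Real.log (fs j x) + fs k x * Real.log (fs k x) + 2) ∂ν :=
      integral_const_mul _ _
    have E6 : (∫ x, (fs j x * Real.log (fs j x) + fs k x * Real.log (fs k x) + 2) ∂ν)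
        = (∫ x, (fs j x * Real.log (fs j x) + fs k x * Real.log (fs k x)) ∂ν)
          + ∫ (_ : X), (2:ℝ) ∂ν :=
      integral_add ((hfs_ent_int j).add (hfs_ent_int k)) (integrable_const 2)
    have E7 : (∫ x, (fs j x * Real.log (fs j x) + fs k x * Real.log (fs k x)) ∂ν)
        = (∫ x, fs j x * Real.log (fs j x) ∂ν) + ∫ x, fs k x * Real.log (fs k x) ∂ν :=
      integral_add (hfs_ent_int j) (hfs_ent_int k)
    have E8 : (∫ (_ : X), (2:ℝ) ∂ν) = 2 := by simp
    have E9 : (∫ x, (4 * M * K / δ) * (|u j x - v x| + |u k x - v x|) ∂ν)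
        = (4 * M * K / δ) * ∫ x, (|u j x - v x| + |u k x - v x|) ∂ν :=
      integral_const_mul _ _
    have E10 : (∫ x, (|u j x - v x| + |u k x - v x|) ∂ν) = a j + a k :=
      integral_add (hint_uv j) (hint_uv k)
    rw [E1, E2, E3, E4, E5, E6, E7, E8, E9, E10]
  have step3 : δ * ((∫ x, fs j x ∂ν) + (∫ x, fs k x ∂ν))
        + (2 * M / Real.log K) * ((∫ x, fs j x * Real.log (fs j x) ∂ν)
            + (∫ x, fs k x * Real.log (fs k x) ∂ν) + 2)
        + (4 * M * K / δ) * (a j + a k)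
      ≤ δ * ((C + 1) + (C + 1)) + (2 * M / Real.log K) * (C + C + 2)
        + (4 * M * K / δ) * (a j + a k) := by
    gcongr
    · exact hmass j
    · exact hmass k
    · exact hfs_ent j
    · exact hfs_ent k
  -- numeric bounds
  have t1 : δ * ((C + 1) + (C + 1)) = ε / 3 := by
    rw [hδ_def]
    field_simp
    ring
  have t2 : (2 * M / Real.log K) * (C + C + 2) ≤ ε / 3 := by
    rw [hlogK]
    rw [div_mul_eq_mul_div, div_le_iff₀ hLpos]
    have hLε : (ε / 3) * L = 4 * M * (C + 1) + ε / 3 := by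
      rw [hL_def]
      field_simp
      ring
    nlinarith
  have t3 : (4 * M * K / δ) * (a j + a k) < ε / 3 := by
    have h1 : (4 * M * K / δ) * (a j + a k) ≤ ((4 * M * K + 1) / δ) * (a j + a k) := by
      apply mul_le_mul_of_nonneg_right _ (by linarith [ha_nonneg j, ha_nonneg k])
      gcongr
      linarith
    have h2 : ((4 * M * K + 1) / δ) * (a j + a k) < ((4 * M * K + 1) / δ) * (2 * η) := by
      apply mul_lt_mul_of_pos_left (by linarith) (by positivity)
    have h3 : ((4 * M * K + 1) / δ) * (2 * η) = ε / 3 := by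
      rw [hη_def]
      field_simp
      ring
    linarith
  calc ∫ x, |u j x - u k x| * (fs j x + fs k x) ∂ν
      ≤ δ * ((C + 1) + (C + 1)) + (2 * M / Real.log K) * (C + C + 2)
        + (4 * M * K / δ) * (a j + a k) := by
        rw [step2] at step1
        linarith
  _ < ε := by rw [t1]; linarith
end
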